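/- Let {e_k} be an orthonormal basis of H, m ≥ 1, and x_k = e_1 + k e_2 + ... + k^{m−1} e_m + e_{m+k} for k ≥ 1. Then {x_k} is complete and minimal with biorthogonal system {e_{m+k}}, and the defect of {x_k} with respect to σ ⊆ ℕ equals m if σ is finite and 0 if σ is infinite; in particular the set of all defects of this system is {0, m}. -/

import Mathlib

open Filter Topology

noncomputable section

variable {H : Type*} [NormedAddCommGroup H] [InnerProductSpace ℂ H] [CompleteSpace H]

/-- Closed linear span of a set of vectors. -/
def clSpan (s : Set H) : Submodule ℂ H := (Submodule.span ℂ s).topologicalClosure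

instance (s : Set H) : CompleteSpace (clSpan s) :=
  (Submodule.isClosed_topologicalClosure _).completeSpace_coe

/-- Orthogonal projection onto the closed linear span of `s`, as a map `H → H`. -/
def projS (s : Set H) : H →L[ℂ] H :=
  (clSpan s).subtypeL ∘L (clSpan s).orthogonalProjectionOnto

/-- The system `x` is complete: its closed linear span is all of `H`. -/
def IsCompleteSystem (x : ℕ → H) : Prop := clSpan (Set.range x) = ⊤

/-- The system `x` is minimal: no vector lies in the closed span of the others. -/
def IsMinimalSystem (x : ℕ → H) : Prop :=
  ∀ k, x k ∉ clSpan (x '' {j | j ≠ k})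

/-- `y` is biorthogonal to `x`. -/
def IsBiorthogonal (x y : ℕ → H) : Prop :=
  ∀ k j, (inner ℂ (x k) (y j) : ℂ) = if k = j then 1 else 0

/-! The coordinates `a n = ⟪e n, h⟫` of a vector `h` orthogonal to `x_k` (`k ∈ σ`) and to
`e (m + k)` (`k ∉ σ`) satisfy `a (m + k) = -p (k + 1)` for `k ∈ σ` and `a (m + k) = 0` otherwise,
where `p` is the polynomial with coefficients `a 0, …, a (m - 1)`; so `h` is determined by these
`m` numbers. For finite `σ` every choice is admissible, so the defect is `m`. For infinite `σ`,
`a (m + k) → 0` makes `p` tend to `0` along an unbounded sequence, so `p = 0` and `h = 0`.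
Completeness is the case `σ = ℕ`, and minimality follows from biorthogonality. -/

open scoped InnerProductSpace Polynomial

section Orthogonal

variable {𝕜 E : Type*} [RCLike 𝕜] [NormedAddCommGroup E] [InnerProductSpace 𝕜 E]

theorem Submodule.mem_orthogonal_span_iff {s : Set E} {h : E} :
    h ∈ (Submodule.span 𝕜 s)ᗮ ↔ ∀ v ∈ s, ⟪v, h⟫_𝕜 = 0 := by
  rw [← Submodule.span_singleton_le_iff_mem, ← Submodule.isOrtho_iff_le, Submodule.isOrtho_comm,
    Submodule.isOrtho_span]
  simp

theorem Orthonormal.exists_forall_inner_eq {ι : Type*} {v : ι → E} (hv : Orthonormal 𝕜 v)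
    {c : ι → 𝕜} (hc : c.support.Finite) : ∃ w : E, ∀ i, ⟪v i, w⟫_𝕜 = c i :=
  ⟨Finsupp.linearCombination 𝕜 v (Finsupp.ofSupportFinite c hc), fun i => by
    rw [hv.inner_right_finsupp, Finsupp.ofSupportFinite_coe]⟩

theorem Orthonormal.tendsto_inner_cofinite {ι : Type*} {v : ι → E} (hv : Orthonormal 𝕜 v)
    (h : E) : Tendsto (fun i => ⟪v i, h⟫_𝕜) cofinite (𝓝 0) := by
  have hsq := (hv.inner_products_summable h).tendsto_cofinite_zero
  rw [tendsto_zero_iff_norm_tendsto_zero]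
  simpa [Function.comp_def, Real.sqrt_sq (norm_nonneg _)] using
    (Real.continuous_sqrt.tendsto' 0 0 Real.sqrt_zero).comp hsq

theorem HilbertBasis.eq_zero_of_forall_inner_eq_zero {ι : Type*} (b : HilbertBasis ι 𝕜 E) {h : E}
    (hh : ∀ i, ⟪b i, h⟫_𝕜 = 0) : h = 0 :=
  b.repr.injective <| by ext i; simp [HilbertBasis.repr_apply_apply, hh]

end Orthogonal

section Polynomial

variable {α 𝕜 : Type*} [NormedField 𝕜] {l : Filter α} [l.NeBot] {z : α → 𝕜}

theorem Polynomial.eq_zero_of_tendsto_eval_zero {P : 𝕜[X]} (hz : Tendsto (‖z ·‖) l atTop)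
    (hP : Tendsto (fun a => P.eval (z a)) l (𝓝 0)) : P = 0 := by
  rcases lt_or_ge 0 P.degree with hdeg | hdeg
  · exact absurd hP.norm (not_tendsto_nhds_of_tendsto_atTop (P.tendsto_norm_atTop hdeg hz) _)
  · rw [Polynomial.eq_C_of_degree_le_zero hdeg] at hP ⊢
    have hcoeff : P.coeff 0 = 0 := by simpa using hP
    rw [hcoeff, map_zero]

theorem eq_zero_of_tendsto_sum_pow_mul {m : ℕ} {c : ℕ → 𝕜} (hz : Tendsto (‖z ·‖) l atTop)
    (hc : Tendsto (fun a => ∑ j ∈ Finset.range m, z a ^ j * c j) l (𝓝 0)) :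
    ∀ j < m, c j = 0 := by
  set P : 𝕜[X] := ∑ j ∈ Finset.range m, Polynomial.X ^ j * Polynomial.C (c j)
  have hP : P = 0 := Polynomial.eq_zero_of_tendsto_eval_zero hz <| by
    simpa only [P, Polynomial.eval_finsetSum, Polynomial.eval_mul, Polynomial.eval_pow,
      Polynomial.eval_X, Polynomial.eval_C] using hc
  intro j hj
  simpa [P, Polynomial.finsetSum_coeff, Polynomial.coeff_mul_C, Polynomial.coeff_X_pow, hj]
    using congrArg (Polynomial.coeff · j) hP

end Polynomial

section Systems

variable {E : Type*} [NormedAddCommGroup E] [InnerProductSpace ℂ E]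

theorem mem_orthogonal_clSpan_iff {s : Set E} {h : E} :
    h ∈ (clSpan s)ᗮ ↔ ∀ v ∈ s, ⟪v, h⟫_ℂ = 0 := by
  rw [clSpan, Submodule.orthogonal_closure, Submodule.mem_orthogonal_span_iff]

theorem IsBiorthogonal.isMinimalSystem {x y : ℕ → E} (hxy : IsBiorthogonal x y) :
    IsMinimalSystem x := by
  intro k hk
  have hyk : y k ∈ (clSpan (x '' {j | j ≠ k}))ᗮ := by
    rw [mem_orthogonal_clSpan_iff]
    rintro _ ⟨j, hj, rfl⟩
    exact (hxy j k).trans (if_neg hj)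
  simpa [hxy k k] using (Submodule.mem_orthogonal _ _).mp hyk _ hk

/-- The defect of `x` with respect to `σ` is the rank of this space, `y` playing the role of the
biorthogonal system `x*`. -/
def defectSpace (x y : ℕ → E) (σ : Set ℕ) : Submodule ℂ E := (clSpan (x '' σ ∪ y '' σᶜ))ᗮ

theorem mem_defectSpace_iff {x y : ℕ → E} {σ : Set ℕ} {h : E} :
    h ∈ defectSpace x y σ ↔ (∀ k ∈ σ, ⟪x k, h⟫_ℂ = 0) ∧ ∀ k ∉ σ, ⟪y k, h⟫_ℂ = 0 := by
  simp [defectSpace, mem_orthogonal_clSpan_iff, or_imp, forall_and]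

end Systems

section PowerSystem

variable {E : Type*} [NormedAddCommGroup E] [InnerProductSpace ℂ E] (b : HilbertBasis ℕ ℂ E)
  (m : ℕ)

def powerSystem (k : ℕ) : E := (∑ j ∈ Finset.range m, ((k + 1 : ℂ)) ^ j • b j) + b (m + k)

theorem inner_powerSystem (k : ℕ) (h : E) :
    ⟪powerSystem b m k, h⟫_ℂ =
      ∑ j ∈ Finset.range m, ((k : ℂ) + 1) ^ j * ⟪b j, h⟫_ℂ + ⟪b (m + k), h⟫_ℂ := by
  simp only [powerSystem, inner_add_left, sum_inner, inner_smul_left, map_pow, map_add, map_one,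
    map_natCast]

theorem isBiorthogonal_powerSystem : IsBiorthogonal (powerSystem b m) (fun k => b (m + k)) := by
  intro k j
  have hbb := orthonormal_iff_ite.mp b.orthonormal
  rw [inner_powerSystem, Finset.sum_eq_zero fun i hi => by
    rw [hbb, if_neg (by have := Finset.mem_range.mp hi; omega), mul_zero], zero_add, hbb]
  simp

theorem mem_defectSpace_powerSystem_iff {σ : Set ℕ} {h : E} :
    h ∈ defectSpace (powerSystem b m) (fun k => b (m + k)) σ ↔
      (∀ k ∈ σ, ∑ j ∈ Finset.range m, ((k : ℂ) + 1) ^ j * ⟪b j, h⟫_ℂ = -⟪b (m + k), h⟫_ℂ) ∧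
        ∀ k ∉ σ, ⟪b (m + k), h⟫_ℂ = 0 := by
  simp only [mem_defectSpace_iff, inner_powerSystem, ← eq_neg_iff_add_eq_zero]

variable {b m}

theorem eq_zero_of_mem_defectSpace_powerSystem {σ : Set ℕ} {h : E}
    (hh : h ∈ defectSpace (powerSystem b m) (fun k => b (m + k)) σ)
    (h0 : ∀ j < m, ⟪b j, h⟫_ℂ = 0) : h = 0 := by
  obtain ⟨hσ, hσc⟩ := (mem_defectSpace_powerSystem_iff b m).mp hh
  refine b.eq_zero_of_forall_inner_eq_zero fun n => ?_
  obtain hn | ⟨k, rfl⟩ : n < m ∨ ∃ k, n = m + k := by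
    rcases lt_or_ge n m with hn | hn
    exacts [.inl hn, .inr ⟨n - m, by omega⟩]
  · exact h0 n hn
  by_cases hk : k ∈ σ
  · have := hσ k hk
    rwa [Finset.sum_eq_zero fun j hj => by rw [h0 j (Finset.mem_range.mp hj), mul_zero],
      eq_comm, neg_eq_zero] at this
  · exact hσc k hk

theorem inner_eq_zero_of_mem_defectSpace_powerSystem {σ : Set ℕ} (hσ : σ.Infinite) {h : E}
    (hh : h ∈ defectSpace (powerSystem b m) (fun k => b (m + k)) σ) :
    ∀ j < m, ⟪b j, h⟫_ℂ = 0 := by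
  have : (atTop ⊓ 𝓟 σ).NeBot := frequently_iff_neBot.mp (Nat.frequently_atTop_iff_infinite.mpr hσ)
  have hnorm : Tendsto (fun k : ℕ => ‖(k : ℂ) + 1‖) atTop atTop := by
    have hk : ∀ k : ℕ, ‖(k : ℂ) + 1‖ = k + 1 := fun k => by
      exact_mod_cast Complex.norm_natCast (k + 1)
    simpa only [hk] using tendsto_atTop_add_const_right _ 1 tendsto_natCast_atTop_atTop
  have htail : Tendsto (fun k => -⟪b (m + k), h⟫_ℂ) atTop (𝓝 0) := by
    have hb := b.orthonormal.tendsto_inner_cofinite h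
    rw [Nat.cofinite_eq_atTop] at hb
    simpa [Function.comp_def, add_comm] using (hb.comp (tendsto_add_atTop_nat m)).neg
  refine eq_zero_of_tendsto_sum_pow_mul (l := atTop ⊓ 𝓟 σ) (hnorm.mono_left inf_le_left) ?_
  refine (htail.mono_left inf_le_left).congr' ?_
  filter_upwards [mem_inf_of_right (mem_principal_self σ)] with k hk
  exact ((mem_defectSpace_powerSystem_iff b m).mp hh).1 k hk |>.symm

variable (b m)

theorem defectSpace_powerSystem_eq_bot {σ : Set ℕ} (hσ : σ.Infinite) :
    defectSpace (powerSystem b m) (fun k => b (m + k)) σ = ⊥ :=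
  (Submodule.eq_bot_iff _).mpr fun _ hh =>
    eq_zero_of_mem_defectSpace_powerSystem hh (inner_eq_zero_of_mem_defectSpace_powerSystem hσ hh)

theorem isCompleteSystem_powerSystem [CompleteSpace E] : IsCompleteSystem (powerSystem b m) := by
  have hbot := defectSpace_powerSystem_eq_bot b m Set.infinite_univ
  rwa [defectSpace, Set.image_univ, Set.compl_univ, Set.image_empty, Set.union_empty,
    Submodule.orthogonal_eq_bot_iff] at hbot

theorem exists_mem_defectSpace_powerSystem {σ : Set ℕ} (hσ : σ.Finite) (c : ℕ → ℂ) :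
    ∃ v ∈ defectSpace (powerSystem b m) (fun k => b (m + k)) σ, ∀ j < m, ⟪b j, v⟫_ℂ = c j := by
  classical
  let p : ℕ → ℂ := fun k => ∑ j ∈ Finset.range m, ((k : ℂ) + 1) ^ j * c j
  let g : ℕ → ℂ := fun n => if n < m then c n else if n - m ∈ σ then -p (n - m) else 0
  have hg : g.support.Finite := by
    refine ((Set.finite_Iio m).union (hσ.image (m + ·))).subset fun n hn => ?_
    by_cases hnm : n < m
    · exact .inl hnm
    · refine .inr ⟨n - m, ?_, Nat.add_sub_of_le (not_lt.mp hnm)⟩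
      by_contra hσn
      exact hn (by simp [g, hnm, hσn])
  obtain ⟨v, hv⟩ := b.orthonormal.exists_forall_inner_eq hg
  have hlow : ∀ j < m, ⟪b j, v⟫_ℂ = c j := fun j hj => by simp [hv, g, hj]
  refine ⟨v, (mem_defectSpace_powerSystem_iff b m).mpr ⟨fun k hk => ?_, fun k hk => ?_⟩, hlow⟩
  · rw [Finset.sum_congr rfl fun j hj => by rw [hlow j (Finset.mem_range.mp hj)]]
    simp [hv, g, hk, p]
  · simp [hv, g, hk]

theorem rank_defectSpace_powerSystem {σ : Set ℕ} (hσ : σ.Finite) :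
    Module.rank ℂ (defectSpace (powerSystem b m) (fun k => b (m + k)) σ) = m := by
  set W := defectSpace (powerSystem b m) (fun k => b (m + k)) σ
  let coords : W →ₗ[ℂ] Fin m → ℂ := LinearMap.pi fun i => (innerₛₗ ℂ (b i)).comp W.subtype
  have hinj : Function.Injective coords := (injective_iff_map_eq_zero coords).mpr fun w hw =>
    Subtype.ext <| eq_zero_of_mem_defectSpace_powerSystem w.2 fun j hj => congr_fun hw ⟨j, hj⟩
  have hsurj : Function.Surjective coords := fun c => by
    obtain ⟨v, hvW, hv⟩ :=
      exists_mem_defectSpace_powerSystem b m hσ fun j => if hj : j < m then c ⟨j, hj⟩ else 0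
    exact ⟨⟨v, hvW⟩, funext fun i => by simpa [coords] using hv i i.isLt⟩
  simpa using (LinearEquiv.ofBijective coords ⟨hinj, hsurj⟩).lift_rank_eq

end PowerSystem

theorem defects_zero_m_general
    (b : HilbertBasis ℕ ℂ H) (m : ℕ)
    (x y : ℕ → H)
    (hx : ∀ k : ℕ, x k = (∑ j ∈ Finset.range m, ((k + 1 : ℂ)) ^ j • b j) + b (m + k))
    (hy : ∀ k : ℕ, y k = b (m + k)) :
    IsCompleteSystem x ∧ IsMinimalSystem x ∧ IsBiorthogonal x y ∧
    (∀ σ : Set ℕ, σ.Finite →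
      Module.rank ℂ ↥((clSpan (x '' σ ∪ y '' σᶜ))ᗮ) = (m : Cardinal)) ∧
    (∀ σ : Set ℕ, σ.Infinite →
      Module.rank ℂ ↥((clSpan (x '' σ ∪ y '' σᶜ))ᗮ) = 0) ∧
    {d : Cardinal | ∃ σ : Set ℕ, d = Module.rank ℂ ↥((clSpan (x '' σ ∪ y '' σᶜ))ᗮ)} =
      {0, (m : Cardinal)} := by
  obtain rfl : x = powerSystem b m := funext hx
  obtain rfl : y = fun k => b (m + k) := funext hy
  have hfin (σ : Set ℕ) (hσ : σ.Finite) :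
      Module.rank ℂ (defectSpace (powerSystem b m) (fun k => b (m + k)) σ) = m :=
    rank_defectSpace_powerSystem b m hσ
  have hinf (σ : Set ℕ) (hσ : σ.Infinite) :
      Module.rank ℂ (defectSpace (powerSystem b m) (fun k => b (m + k)) σ) = 0 := by
    rw [defectSpace_powerSystem_eq_bot b m hσ, rank_bot]
  refine ⟨isCompleteSystem_powerSystem b m, (isBiorthogonal_powerSystem b m).isMinimalSystem,
    isBiorthogonal_powerSystem b m, hfin, hinf, ?_⟩
  ext d
  constructor
  · rintro ⟨σ, rfl⟩
    rcases σ.finite_or_infinite with hσ | hσ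
    exacts [.inr (hfin σ hσ), .inl (hinf σ hσ)]
  · rintro (rfl | rfl)
    exacts [⟨.univ, (hinf _ Set.infinite_univ).symm⟩, ⟨∅, (hfin _ Set.finite_empty).symm⟩]

/-- For an orthonormal basis `b` (realizing `e_1, e_2, …` as `b 0, b 1, …`) and `m ≥ 1`, the
system `x_k = e_1 + k e_2 + … + k^{m-1} e_m + e_{m+k}` (here `x k = ∑_{j<m} (k+1)^j b j +
b (m+k)` for `k : ℕ`) is complete and minimal, with biorthogonal system `{e_{m+k}}`; its
defect with respect to `σ ⊆ ℕ` equals `m` when `σ` is finite and `0` when `σ` is infinite,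
so the set of all of its defects is exactly `{0, m}`. -/
theorem defects_zero_m [TopologicalSpace.SeparableSpace H]
    (b : HilbertBasis ℕ ℂ H) (m : ℕ) (hm : 1 ≤ m)
    (x y : ℕ → H)
    (hx : ∀ k : ℕ, x k = (∑ j ∈ Finset.range m, ((k + 1 : ℂ)) ^ j • b j) + b (m + k))
    (hy : ∀ k : ℕ, y k = b (m + k)) :
    IsCompleteSystem x ∧ IsMinimalSystem x ∧ IsBiorthogonal x y ∧
    (∀ σ : Set ℕ, σ.Finite →
      Module.rank ℂ ↥((clSpan (x '' σ ∪ y '' σᶜ))ᗮ) = (m : Cardinal)) ∧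
    (∀ σ : Set ℕ, σ.Infinite →
      Module.rank ℂ ↥((clSpan (x '' σ ∪ y '' σᶜ))ᗮ) = 0) ∧
    {d : Cardinal | ∃ σ : Set ℕ, d = Module.rank ℂ ↥((clSpan (x '' σ ∪ y '' σᶜ))ᗮ)} =
      {0, (m : Cardinal)} :=
  defects_zero_m_general b m x y hx hy
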